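/- arXiv:2207.01051 — 2 statements merged into one kernel-verified Lean document; each statement's English description precedes it below -/
import Mathlib

section
/- Let k ≥ 2, let D be a k-dicritical oriented graph, and let K(D) be the D-knob with base z₁z₂. For every arc a of K(D), the digraph K(D) with a removed has a k-dicolouring in which z₁ and z₂ receive the same colour. -/
/-!
Basic theory of finite digraphs: a digraph has a finite vertex set and a
finite set of arcs (ordered pairs of distinct vertices).
-/

/-- A finite digraph on a vertex type `V`: a finite vertex set together with a
finite set of arcs, each arc being an ordered pair of distinct vertices. -/
structure Digraph' (V : Type*) where
  verts : Finset V
  arcs : Finset (V × V)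
  wf : ∀ a ∈ arcs, a.1 ∈ verts ∧ a.2 ∈ verts ∧ a.1 ≠ a.2

namespace Digraph'

variable {V : Type*} [DecidableEq V]

/-- The number of vertices of a digraph. -/
def n (D : Digraph' V) : ℕ := D.verts.card

/-- The number of arcs of a digraph. -/
def m (D : Digraph' V) : ℕ := D.arcs.card

/-- The set of consecutive (cyclically) pairs of a list, i.e. the arcs of the
directed cycle running through the list. -/
def cyclicArcs (c : List V) : Finset (V × V) := (c.zip (c.rotate 1)).toFinset

/-- The set of consecutive pairs of a list, i.e. the arcs of the directed path
running through the list. -/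
def pathArcs (p : List V) : Finset (V × V) := (p.zip p.tail).toFinset

/-- The symmetric closure of a set of arcs. -/
def symArcs (s : Finset (V × V)) : Finset (V × V) := s ∪ s.image Prod.swap

/-- The arcs of the bidirected path running through a list (each consecutive
pair is joined by a digon). -/
def pathDigonArcs (p : List V) : Finset (V × V) := symArcs (pathArcs p)

/-- `p` is the list of vertices of a path of odd length (an odd number of edges,
equivalently an even number of vertices) from `a` to `b`. -/
def IsOddBidirPathList (p : List V) (a b : V) : Prop :=
  p.Nodup ∧ Even p.length ∧ p.head? = some a ∧ p.getLast? = some b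

/-- The subdigraph induced by `S` contains no directed cycle.  A directed cycle
is given by a nonempty list of at least two distinct vertices, each one having an
arc towards the (cyclically) next one. -/
def AcyclicOn (D : Digraph' V) (S : Finset V) : Prop :=
  ¬ ∃ c : List V, c.Nodup ∧ 2 ≤ c.length ∧ (∀ v ∈ c, v ∈ S) ∧ cyclicArcs c ⊆ D.arcs

/-- `φ` is a `k`-dicolouring of `D`: every colour class induces an acyclic
subdigraph. -/
def IsDicolouring (D : Digraph' V) (k : ℕ) (φ : V → Fin k) : Prop :=
  ∀ i : Fin k, D.AcyclicOn (D.verts.filter fun v => φ v = i)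

/-- `D` admits a `k`-dicolouring. -/
def Dicolourable (D : Digraph' V) (k : ℕ) : Prop :=
  ∃ φ : V → Fin k, D.IsDicolouring k φ

/-- The dichromatic number of `D`: the least `k` such that `D` is
`k`-dicolourable. -/
noncomputable def dichromatic (D : Digraph' V) : ℕ := sInf {k | D.Dicolourable k}

/-- `H` is a subdigraph of `D`. -/
def IsSubdigraph (H D : Digraph' V) : Prop := H.verts ⊆ D.verts ∧ H.arcs ⊆ D.arcs

/-- `H` is a proper subdigraph of `D`. -/
def IsProperSubdigraph (H D : Digraph' V) : Prop :=
  H.IsSubdigraph D ∧ (H.verts ≠ D.verts ∨ H.arcs ≠ D.arcs)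

/-- `D` is `k`-dicritical: its dichromatic number is `k` and every proper
subdigraph has dichromatic number at most `k - 1`. -/
def Dicritical (k : ℕ) (D : Digraph' V) : Prop :=
  D.dichromatic = k ∧
    ∀ H : Digraph' V, H.IsProperSubdigraph D → H.dichromatic ≤ k - 1

/-- `D` is an oriented graph: it has no digon. -/
def Oriented (D : Digraph' V) : Prop := ∀ a ∈ D.arcs, (a.2, a.1) ∉ D.arcs

/-- There is a digon between `u` and `v` in `D`. -/
def HasDigon (D : Digraph' V) (u v : V) : Prop :=
  (u, v) ∈ D.arcs ∧ (v, u) ∈ D.arcs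

/-- `u` and `v` are neighbours: there is at least one arc between them. -/
def UAdj (D : Digraph' V) (u v : V) : Prop :=
  (u, v) ∈ D.arcs ∨ (v, u) ∈ D.arcs

/-- `M` is a matching of digons of `D` (a matching of the digon graph `B(D)`):
a set of digons of `D`, pairwise sharing no end-vertex. -/
def IsDigonMatching (D : Digraph' V) (M : Finset (V × V)) : Prop :=
  (∀ p ∈ M, D.HasDigon p.1 p.2) ∧
    ∀ p ∈ M, ∀ q ∈ M, p ≠ q → p.1 ≠ q.1 ∧ p.1 ≠ q.2 ∧ p.2 ≠ q.1 ∧ p.2 ≠ q.2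

/-- `π(D)`: the maximum size of a matching of the digon graph `B(D)`. -/
noncomputable def piNum (D : Digraph' V) : ℕ :=
  sSup {k | ∃ M : Finset (V × V), D.IsDigonMatching M ∧ M.card = k}

/-- The potential `ρ(D) = 7 n(D) - 3 m(D) - 2 π(D)`. -/
noncomputable def potential (D : Digraph' V) : ℤ :=
  7 * (D.n : ℤ) - 3 * (D.m : ℤ) - 2 * (D.piNum : ℤ)

/-- The subdigraph of `D` induced by `R`. -/
def induce (D : Digraph' V) (R : Finset V) : Digraph' V where
  verts := D.verts ∩ R
  arcs := D.arcs.filter fun a => a.1 ∈ R ∧ a.2 ∈ R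
  wf := by
    intro a ha
    rw [Finset.mem_filter] at ha
    obtain ⟨h, h1, h2⟩ := ha
    obtain ⟨hv1, hv2, hne⟩ := D.wf a h
    exact ⟨Finset.mem_inter.mpr ⟨hv1, h1⟩, Finset.mem_inter.mpr ⟨hv2, h2⟩, hne⟩

/-- The potential `ρ_D(R)` of a set of vertices `R` in `D`: the potential of the
subdigraph of `D` induced by `R`. -/
noncomputable def potentialOn (D : Digraph' V) (R : Finset V) : ℤ :=
  (D.induce R).potential

/-- The digraph obtained from `D` by deleting the arc `a`. -/
def eraseArc (D : Digraph' V) (a : V × V) : Digraph' V where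
  verts := D.verts
  arcs := D.arcs.erase a
  wf := fun b hb => D.wf b (Finset.mem_of_mem_erase hb)

/-- The digraph obtained from `D` by deleting the vertex `v`. -/
def delVert (D : Digraph' V) (v : V) : Digraph' V where
  verts := D.verts.erase v
  arcs := D.arcs.filter fun a => a.1 ≠ v ∧ a.2 ≠ v
  wf := by
    intro a ha
    rw [Finset.mem_filter] at ha
    obtain ⟨h, h1, h2⟩ := ha
    obtain ⟨hv1, hv2, hne⟩ := D.wf a h
    exact ⟨Finset.mem_erase.mpr ⟨h1, hv1⟩, Finset.mem_erase.mpr ⟨h2, hv2⟩, hne⟩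

/-- The degree of `v` in `D`: the number of arcs incident to `v`. -/
def degree (D : Digraph' V) (v : V) : ℕ :=
  (D.arcs.filter fun a => a.1 = v ∨ a.2 = v).card

/-- `D` is a bidirected odd cycle: obtained from an undirected cycle of odd
length (at least 3) by replacing every edge by a digon. -/
def IsBidirectedOddCycle (D : Digraph' V) : Prop :=
  ∃ c : List V, c.Nodup ∧ 3 ≤ c.length ∧ Odd c.length ∧
    D.verts = c.toFinset ∧ D.arcs = symArcs (cyclicArcs c)

/-- `H` is a bidirected odd cycle with one arc removed. -/
def IsBidirOddCycleMinusArc (H : Digraph' V) : Prop :=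
  ∃ (C : Digraph' V) (e : V × V), C.IsBidirectedOddCycle ∧ e ∈ C.arcs ∧
    H.verts = C.verts ∧ H.arcs = C.arcs.erase e

/-- `D` is an odd 3-wheel with center `c`: a vertex `c` joined to a directed
3-cycle `(x, y, z, x)` by three bidirected paths of odd length, pairwise
disjoint except in `c`. -/
def IsOdd3WheelWithCenter (D : Digraph' V) (c : V) : Prop :=
  ∃ (p₁ p₂ p₃ : List V) (x y z : V),
    IsOddBidirPathList p₁ c x ∧ IsOddBidirPathList p₂ c y ∧ IsOddBidirPathList p₃ c z ∧
    p₁.toFinset ∩ p₂.toFinset = {c} ∧ p₁.toFinset ∩ p₃.toFinset = {c} ∧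
    p₂.toFinset ∩ p₃.toFinset = {c} ∧
    D.verts = p₁.toFinset ∪ p₂.toFinset ∪ p₃.toFinset ∧
    D.arcs = pathDigonArcs p₁ ∪ pathDigonArcs p₂ ∪ pathDigonArcs p₃ ∪
      {(x, y), (y, z), (z, x)}

/-- `D` is an odd 3-wheel. -/
def IsOdd3Wheel (D : Digraph' V) : Prop := ∃ c : V, D.IsOdd3WheelWithCenter c

end Digraph'

/-- `K` is the `D`-knob with base `z₁z₂`: `z₁, z₂` are two new vertices, and `K`
is obtained from `D` by adding the arc `z₁z₂` together with all arcs `z₂u` and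
`uz₁` for `u ∈ V(D)`. -/
def Digraph'.IsKnobOf {V : Type*} [DecidableEq V] (D K : Digraph' V) (z₁ z₂ : V) : Prop :=
  z₁ ∉ D.verts ∧ z₂ ∉ D.verts ∧ z₁ ≠ z₂ ∧
  K.verts = insert z₁ (insert z₂ D.verts) ∧
  K.arcs = D.arcs ∪ {(z₁, z₂)} ∪ D.verts.image (fun u => (z₂, u)) ∪
    D.verts.image (fun u => (u, z₁))


/-!
Write `k = m + 1`. If `a` is an arc of `D`, colour `D - a` with `m` colours by criticality and give
`z₁, z₂` the new colour; if `a` is incident to a vertex `u` of `D`, colour `D - u` with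
`m` colours and give `z₁, z₂, u` the new colour. In both cases the new colour class is
acyclic in `K - a`, since `z₂` has no arc to `z₁` and the arc `a` was removed from the
triangle `z₁ → z₂ → u → z₁`. If `a = z₁z₂`, then in `K - a` the vertex `z₁` is a sink and
`z₂` a source, so any `k`-dicolouring of `D` extends by giving `z₁, z₂` a common colour.
-/

namespace Digraph'

variable {V : Type*} [DecidableEq V]

lemma fst_mem_of_mem_cyclicArcs {c : List V} {e : V × V} (h : e ∈ cyclicArcs c) : e.1 ∈ c :=
  (List.of_mem_zip (List.mem_toFinset.mp h)).1

lemma snd_mem_of_mem_cyclicArcs {c : List V} {e : V × V} (h : e ∈ cyclicArcs c) : e.2 ∈ c :=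
  List.mem_rotate.mp (List.of_mem_zip (List.mem_toFinset.mp h)).2

lemma exists_succ_mem_cyclicArcs {l : List V} {v : V} (hv : v ∈ l) :
    ∃ w ∈ l, (v, w) ∈ cyclicArcs l := by
  obtain ⟨i, hi, rfl⟩ := List.mem_iff_getElem.mp hv
  have hi' : i < (l.rotate 1).length := by rwa [List.length_rotate]
  have hz : i < (l.zip (l.rotate 1)).length := by simp [hi]
  refine ⟨(l.rotate 1)[i], List.mem_rotate.mp (List.getElem_mem hi'), ?_⟩
  rw [cyclicArcs, List.mem_toFinset, ← List.getElem_zip (h := hz)]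
  exact List.getElem_mem hz

lemma exists_pred_mem_cyclicArcs {l : List V} {v : V} (hv : v ∈ l) :
    ∃ w ∈ l, (w, v) ∈ cyclicArcs l := by
  obtain ⟨i, hi, rfl⟩ := List.mem_iff_getElem.mp (List.mem_rotate.mpr hv : v ∈ l.rotate 1)
  have hi' : i < l.length := by rwa [List.length_rotate] at hi
  have hz : i < (l.zip (l.rotate 1)).length := by simp [hi']
  refine ⟨l[i], List.getElem_mem hi', ?_⟩
  rw [cyclicArcs, List.mem_toFinset, ← List.getElem_zip (h := hz)]
  exact List.getElem_mem hz

section AcyclicOn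

variable {D G : Digraph' V} {S T : Finset V}

lemma AcyclicOn.mono (h : S ⊆ T) (hT : D.AcyclicOn T) : D.AcyclicOn S :=
  fun ⟨c, hnd, hlen, hmem, harcs⟩ => hT ⟨c, hnd, hlen, fun v hv => h (hmem v hv), harcs⟩

lemma acyclicOn_of_subsingleton (hS : (S : Set V).Subsingleton) : D.AcyclicOn S := by
  rintro ⟨l, hnd, hlen, hmem, -⟩
  have h01 : l[0] = l[1] := hS (hmem _ (List.getElem_mem _)) (hmem _ (List.getElem_mem _))
  exact absurd ((List.Nodup.getElem_inj_iff hnd).mp h01) (by simp)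

lemma AcyclicOn.of_arcs (hD : D.AcyclicOn S)
    (h : ∀ e ∈ G.arcs, e.1 ∈ S → e.2 ∈ S → e ∈ D.arcs) : G.AcyclicOn S :=
  fun ⟨c, hnd, hlen, hmem, harcs⟩ => hD ⟨c, hnd, hlen, hmem, fun e he =>
    h e (harcs he) (hmem _ (fst_mem_of_mem_cyclicArcs he)) (hmem _ (snd_mem_of_mem_cyclicArcs he))⟩

lemma AcyclicOn.eraseArc (hD : D.AcyclicOn S) (a : V × V) : (D.eraseArc a).AcyclicOn S :=
  hD.of_arcs fun _ he _ _ => Finset.mem_of_mem_erase he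

lemma AcyclicOn.insert_sink {v : V} (hS : D.AcyclicOn S) (hv : ∀ w ∈ S, (v, w) ∉ D.arcs) :
    D.AcyclicOn (insert v S) := by
  rintro ⟨c, hnd, hlen, hmem, harcs⟩
  by_cases hvc : v ∈ c
  · obtain ⟨w, hwc, hvw⟩ := exists_succ_mem_cyclicArcs hvc
    have hvw' := harcs hvw
    have hwS := (Finset.mem_insert.mp (hmem w hwc)).resolve_left (D.wf _ hvw').2.2.symm
    exact hv w hwS hvw'
  · exact hS ⟨c, hnd, hlen, fun w hw =>
      (Finset.mem_insert.mp (hmem w hw)).resolve_left (by rintro rfl; exact hvc hw), harcs⟩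

lemma AcyclicOn.insert_source {v : V} (hS : D.AcyclicOn S) (hv : ∀ w ∈ S, (w, v) ∉ D.arcs) :
    D.AcyclicOn (insert v S) := by
  rintro ⟨c, hnd, hlen, hmem, harcs⟩
  by_cases hvc : v ∈ c
  · obtain ⟨w, hwc, hwv⟩ := exists_pred_mem_cyclicArcs hvc
    have hwv' := harcs hwv
    have hwS := (Finset.mem_insert.mp (hmem w hwc)).resolve_left (D.wf _ hwv').2.2
    exact hv w hwS hwv'
  · exact hS ⟨c, hnd, hlen, fun w hw =>
      (Finset.mem_insert.mp (hmem w hw)).resolve_left (by rintro rfl; exact hvc hw), harcs⟩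

end AcyclicOn

lemma IsDicolouring.extend {G H : Digraph' V} {m : ℕ} {ψ : V → Fin m}
    (hψ : H.IsDicolouring m ψ) {Z : Finset V} (hZ : G.AcyclicOn Z)
    (hverts : ∀ v ∈ G.verts, v ∉ Z → v ∈ H.verts)
    (harcs : ∀ e ∈ G.arcs, e.1 ∉ Z → e.2 ∉ Z → e ∈ H.arcs) :
    G.IsDicolouring (m + 1) fun v => if v ∈ Z then Fin.last m else (ψ v).castSucc := by
  intro i
  induction i using Fin.lastCases with
  | last =>
    refine hZ.mono fun v hv => ?_
    by_contra hvZ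
    simp [hvZ, Fin.castSucc_ne_last] at hv
  | cast j =>
    have hsub : G.verts.filter (fun v => (if v ∈ Z then Fin.last m else (ψ v).castSucc) =
        j.castSucc) ⊆ H.verts.filter fun v => v ∉ Z ∧ ψ v = j := by
      intro v hv
      obtain ⟨hvG, hvj⟩ := Finset.mem_filter.mp hv
      have hvZ : v ∉ Z := fun hvZ => by simp [hvZ, (Fin.castSucc_ne_last j).symm] at hvj
      simp only [hvZ, if_false, Fin.castSucc_inj] at hvj
      exact Finset.mem_filter.mpr ⟨hverts v hvG hvZ, hvZ, hvj⟩
    refine (((hψ j).mono ?_).of_arcs ?_).mono hsub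
    · intro v hv
      simp only [Finset.mem_filter] at hv ⊢
      exact ⟨hv.1, hv.2.2⟩
    · intro e he h1 h2
      exact harcs e he (Finset.mem_filter.mp h1).2.1 (Finset.mem_filter.mp h2).2.1

lemma Dicolourable.succ {D : Digraph' V} {m : ℕ} (h : D.Dicolourable m) :
    D.Dicolourable (m + 1) :=
  let ⟨_, hψ⟩ := h
  ⟨_, hψ.extend (Z := ∅) (acyclicOn_of_subsingleton (by simp)) (fun v hv _ => hv)
    (fun e he _ _ => he)⟩

lemma Dicolourable.mono {D : Digraph' V} {m n : ℕ} (h : D.Dicolourable m) (hmn : m ≤ n) :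
    D.Dicolourable n :=
  Nat.le_induction h (fun _ _ => Dicolourable.succ) n hmn

lemma dicolourable_card_add_one (D : Digraph' V) : D.Dicolourable (D.verts.card + 1) := by
  refine ⟨fun v => if h : v ∈ D.verts then (D.verts.equivFin ⟨v, h⟩).castSucc else 0,
    fun i => acyclicOn_of_subsingleton ?_⟩
  intro v hv w hw
  simp only [Finset.coe_filter, Set.mem_ofPred_eq] at hv hw
  obtain ⟨hvD, rfl⟩ := hv
  obtain ⟨hwD, hw⟩ := hw
  simp only [dif_pos hvD, dif_pos hwD, Fin.castSucc_inj, EmbeddingLike.apply_eq_iff_eq,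
    Subtype.mk.injEq] at hw
  exact hw.symm

lemma dicolourable_of_dichromatic_le {D : Digraph' V} {m : ℕ} (h : D.dichromatic ≤ m) :
    D.Dicolourable m :=
  (Nat.sInf_mem (s := {n | D.Dicolourable n}) ⟨_, D.dicolourable_card_add_one⟩).mono h

lemma isProperSubdigraph_eraseArc {D : Digraph' V} {a : V × V} (ha : a ∈ D.arcs) :
    (D.eraseArc a).IsProperSubdigraph D :=
  ⟨⟨subset_rfl, Finset.erase_subset _ _⟩, Or.inr (Finset.erase_ne_self.mpr ha)⟩

lemma isProperSubdigraph_delVert {D : Digraph' V} {v : V} (hv : v ∈ D.verts) :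
    (D.delVert v).IsProperSubdigraph D :=
  ⟨⟨Finset.erase_subset _ _, Finset.filter_subset _ _⟩, Or.inl (Finset.erase_ne_self.mpr hv)⟩

lemma Dicritical.dicolourable {D : Digraph' V} {k : ℕ} (hD : D.Dicritical k) :
    D.Dicolourable k :=
  dicolourable_of_dichromatic_le hD.1.le

lemma Dicritical.dicolourable_of_isProperSubdigraph {D H : Digraph' V} {m : ℕ}
    (hD : D.Dicritical (m + 1)) (hH : H.IsProperSubdigraph D) : H.Dicolourable m :=
  dicolourable_of_dichromatic_le (by simpa using hD.2 H hH)

end Digraph'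

namespace Digraph'.IsKnobOf

open Digraph'

variable {V : Type*} [DecidableEq V] {D K : Digraph' V} {z₁ z₂ : V}

lemma mem_arcs_cases (h : D.IsKnobOf K z₁ z₂) {e : V × V} (he : e ∈ K.arcs) :
    e ∈ D.arcs ∨ e = (z₁, z₂) ∨ (∃ u ∈ D.verts, e = (z₂, u)) ∨ ∃ u ∈ D.verts, e = (u, z₁) := by
  rw [h.2.2.2.2] at he
  simp only [Finset.mem_union, Finset.mem_singleton, Finset.mem_image] at he
  rcases he with ((he | he) | ⟨u, hu, rfl⟩) | ⟨u, hu, rfl⟩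
  · exact Or.inl he
  · exact Or.inr (Or.inl he)
  · exact Or.inr (Or.inr (Or.inl ⟨u, hu, rfl⟩))
  · exact Or.inr (Or.inr (Or.inr ⟨u, hu, rfl⟩))

lemma mem_verts_of_ne (h : D.IsKnobOf K z₁ z₂) {v : V} (hv : v ∈ K.verts) (h₁ : v ≠ z₁)
    (h₂ : v ≠ z₂) : v ∈ D.verts := by
  rw [h.2.2.2.1] at hv
  simpa [h₁, h₂] using hv

lemma mem_arcs_of_mem_verts (h : D.IsKnobOf K z₁ z₂) {e : V × V} (he : e ∈ K.arcs)
    (h₁ : e.1 ∈ D.verts) (h₂ : e.2 ∈ D.verts) : e ∈ D.arcs := by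
  rcases h.mem_arcs_cases he with hD | rfl | ⟨u, -, rfl⟩ | ⟨u, -, rfl⟩
  · exact hD
  · exact absurd h₁ h.1
  · exact absurd h₁ h.2.1
  · exact absurd h₂ h.1

lemma eq_z₂_of_arc_from_z₁ (h : D.IsKnobOf K z₁ z₂) {w : V} (hw : (z₁, w) ∈ K.arcs) :
    w = z₂ := by
  rcases h.mem_arcs_cases hw with hD | he | ⟨u, -, he⟩ | ⟨u, hu, he⟩
  · exact absurd (D.wf _ hD).1 h.1
  · exact (Prod.mk.inj he).2
  · exact absurd (Prod.mk.inj he).1 h.2.2.1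
  · obtain ⟨rfl, -⟩ := Prod.mk.inj he
    exact absurd hu h.1

lemma eq_z₁_of_arc_to_z₂ (h : D.IsKnobOf K z₁ z₂) {w : V} (hw : (w, z₂) ∈ K.arcs) :
    w = z₁ := by
  rcases h.mem_arcs_cases hw with hD | he | ⟨u, hu, he⟩ | ⟨u, -, he⟩
  · exact absurd (D.wf _ hD).2.1 h.2.1
  · exact (Prod.mk.inj he).1
  · obtain ⟨-, rfl⟩ := Prod.mk.inj he
    exact absurd hu h.2.1
  · exact absurd (Prod.mk.inj he).2.symm h.2.2.1

lemma z₂_z₁_notMem_arcs (h : D.IsKnobOf K z₁ z₂) : (z₂, z₁) ∉ K.arcs := by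
  intro hK
  rcases h.mem_arcs_cases hK with hD | he | ⟨u, hu, he⟩ | ⟨u, hu, he⟩
  · exact h.2.1 (D.wf _ hD).1
  · exact h.2.2.1 (Prod.mk.inj he).1.symm
  · exact h.1 ((Prod.mk.inj he).2 ▸ hu)
  · exact h.2.1 ((Prod.mk.inj he).1 ▸ hu)

lemma acyclicOn_pair (h : D.IsKnobOf K z₁ z₂) : K.AcyclicOn {z₁, z₂} :=
  (acyclicOn_of_subsingleton (by simp)).insert_source (by simpa using h.z₂_z₁_notMem_arcs)

lemma acyclicOn_eraseArc_from_z₂ (h : D.IsKnobOf K z₁ z₂) {u : V} (hu : u ∈ D.verts) :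
    (K.eraseArc (z₂, u)).AcyclicOn (insert u {z₁, z₂}) := by
  refine (h.acyclicOn_pair.eraseArc _).insert_source ?_
  simp only [Finset.mem_insert, Finset.mem_singleton, forall_eq_or_imp, forall_eq]
  refine ⟨fun hK => ?_, fun hK => Finset.ne_of_mem_erase hK rfl⟩
  exact h.2.1 (h.eq_z₂_of_arc_from_z₁ (Finset.mem_of_mem_erase hK) ▸ hu)

lemma acyclicOn_eraseArc_to_z₁ (h : D.IsKnobOf K z₁ z₂) {u : V} (hu : u ∈ D.verts) :
    (K.eraseArc (u, z₁)).AcyclicOn (insert u {z₁, z₂}) := by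
  refine (h.acyclicOn_pair.eraseArc _).insert_sink ?_
  simp only [Finset.mem_insert, Finset.mem_singleton, forall_eq_or_imp, forall_eq]
  refine ⟨fun hK => Finset.ne_of_mem_erase hK rfl, fun hK => ?_⟩
  exact h.1 (h.eq_z₁_of_arc_to_z₂ (Finset.mem_of_mem_erase hK) ▸ hu)

lemma isDicolouring_eraseArc_base (h : D.IsKnobOf K z₁ z₂) {k : ℕ} {ψ : V → Fin k}
    (hψ : D.IsDicolouring k ψ) (c : Fin k) :
    (K.eraseArc (z₁, z₂)).IsDicolouring k
      fun v => if v ∈ ({z₁, z₂} : Finset V) then c else ψ v := by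
  intro i
  have hsink : ∀ w, (z₁, w) ∉ (K.eraseArc (z₁, z₂)).arcs := fun w hw =>
    Finset.ne_of_mem_erase hw (by rw [h.eq_z₂_of_arc_from_z₁ (Finset.mem_of_mem_erase hw)])
  have hsource : ∀ w, (w, z₂) ∉ (K.eraseArc (z₁, z₂)).arcs := fun w hw =>
    Finset.ne_of_mem_erase hw (by rw [h.eq_z₁_of_arc_to_z₂ (Finset.mem_of_mem_erase hw)])
  have hD : (K.eraseArc (z₁, z₂)).AcyclicOn (D.verts.filter (ψ · = i)) :=
    (hψ i).of_arcs fun e he h₁ h₂ => h.mem_arcs_of_mem_verts (Finset.mem_of_mem_erase he)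
      (Finset.mem_filter.mp h₁).1 (Finset.mem_filter.mp h₂).1
  refine ((hD.insert_sink fun w _ => hsink w).insert_source fun w _ => hsource w).mono ?_
  intro v hv
  obtain ⟨hvK, hvi⟩ := Finset.mem_filter.mp hv
  by_cases hvz : v ∈ ({z₁, z₂} : Finset V)
  · simp only [Finset.mem_insert, Finset.mem_singleton] at hvz
    rcases hvz with rfl | rfl <;> simp
  · simp only [if_neg hvz] at hvi
    simp only [Finset.mem_insert, Finset.mem_singleton, not_or] at hvz
    simp [Finset.mem_filter, h.mem_verts_of_ne hvK hvz.1 hvz.2, hvi]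

lemma exists_dicolouring_eraseArc (h : D.IsKnobOf K z₁ z₂) {a : V × V} {H : Digraph' V}
    {m : ℕ} (hH : H.Dicolourable m) {Z : Finset V} (hz₁ : z₁ ∈ Z) (hz₂ : z₂ ∈ Z)
    (hZ : (K.eraseArc a).AcyclicOn Z) (hverts : ∀ v ∈ D.verts, v ∉ Z → v ∈ H.verts)
    (harcs : ∀ e ∈ D.arcs, e ≠ a → e.1 ∉ Z → e.2 ∉ Z → e ∈ H.arcs) :
    ∃ φ : V → Fin (m + 1), (K.eraseArc a).IsDicolouring (m + 1) φ ∧ φ z₁ = φ z₂ := by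
  obtain ⟨ψ, hψ⟩ := hH
  have hD : ∀ v ∈ K.verts, v ∉ Z → v ∈ D.verts := fun v hv hvZ =>
    h.mem_verts_of_ne hv (fun h => hvZ (h ▸ hz₁)) (fun h => hvZ (h ▸ hz₂))
  refine ⟨_, hψ.extend hZ (fun v hv hvZ => hverts v (hD v hv hvZ) hvZ) ?_, by simp [hz₁, hz₂]⟩
  intro e he h₁ h₂
  obtain ⟨hne, heK⟩ := Finset.mem_erase.mp he
  obtain ⟨he₁, he₂, -⟩ := K.wf e heK
  exact harcs e (h.mem_arcs_of_mem_verts heK (hD _ he₁ h₁) (hD _ he₂ h₂)) hne h₁ h₂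

lemma exists_dicolouring_eraseArc_of_eraseArc (h : D.IsKnobOf K z₁ z₂) {a : V × V} {m : ℕ} (hH : (D.eraseArc a).Dicolourable m) :
    ∃ φ : V → Fin (m + 1), (K.eraseArc a).IsDicolouring (m + 1) φ ∧ φ z₁ = φ z₂ :=
  h.exists_dicolouring_eraseArc hH (Z := {z₁, z₂}) (by simp) (by simp)
    (h.acyclicOn_pair.eraseArc a) (fun v hv _ => hv)
    (fun e he hne _ _ => Finset.mem_erase.mpr ⟨hne, he⟩)

lemma exists_dicolouring_eraseArc_of_delVert (h : D.IsKnobOf K z₁ z₂) {a : V × V} {u : V}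
    (hZ : (K.eraseArc a).AcyclicOn (insert u {z₁, z₂})) {m : ℕ}
    (hH : (D.delVert u).Dicolourable m) :
    ∃ φ : V → Fin (m + 1), (K.eraseArc a).IsDicolouring (m + 1) φ ∧ φ z₁ = φ z₂ :=
  h.exists_dicolouring_eraseArc hH (by simp) (by simp) hZ
    (fun v hv hvZ => Finset.mem_erase.mpr ⟨fun h => hvZ (by simp [h]), hv⟩)
    (fun e he _ h₁ h₂ => Finset.mem_filter.mpr
      ⟨he, fun h => h₁ (by simp [h]), fun h => h₂ (by simp [h])⟩)

end Digraph'.IsKnobOf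

open Digraph' in
theorem knob_minus_arc_dicolouring_general {V : Type*} [DecidableEq V] (k : ℕ)
    (D K : Digraph' V) (z₁ z₂ : V)
    (hcrit : Digraph'.Dicritical k D)
    (hknob : D.IsKnobOf K z₁ z₂) :
    ∀ a ∈ K.arcs, ∃ φ : V → Fin k,
      (K.eraseArc a).IsDicolouring k φ ∧ φ z₁ = φ z₂ := by
  intro a ha
  obtain ⟨ψ, hψ⟩ := hcrit.dicolourable
  obtain ⟨m, rfl⟩ := Nat.exists_eq_add_one_of_ne_zero (ψ z₁).pos.ne'
  rcases hknob.mem_arcs_cases ha with haD | rfl | ⟨u, hu, rfl⟩ | ⟨u, hu, rfl⟩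
  · exact hknob.exists_dicolouring_eraseArc_of_eraseArc
      (hcrit.dicolourable_of_isProperSubdigraph (isProperSubdigraph_eraseArc haD))
  · exact ⟨_, hknob.isDicolouring_eraseArc_base hψ (ψ z₁), by simp⟩
  · exact hknob.exists_dicolouring_eraseArc_of_delVert (hknob.acyclicOn_eraseArc_from_z₂ hu)
      (hcrit.dicolourable_of_isProperSubdigraph (isProperSubdigraph_delVert hu))
  · exact hknob.exists_dicolouring_eraseArc_of_delVert (hknob.acyclicOn_eraseArc_to_z₁ hu)
      (hcrit.dicolourable_of_isProperSubdigraph (isProperSubdigraph_delVert hu))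

open Digraph' in
/-- If `k ≥ 2`, `D` is a `k`-dicritical oriented graph and
`K(D)` is the `D`-knob with base `z₁z₂`, then for every arc `a` of `K(D)` the
digraph `K(D)` minus `a` has a `k`-dicolouring in which `z₁` and `z₂` get the
same colour. -/
theorem knob_minus_arc_dicolouring {V : Type*} [DecidableEq V] (k : ℕ) (hk : 2 ≤ k)
    (D K : Digraph' V) (z₁ z₂ : V)
    (hcrit : Digraph'.Dicritical k D) (horient : D.Oriented)
    (hknob : D.IsKnobOf K z₁ z₂) :
    ∀ a ∈ K.arcs, ∃ φ : V → Fin k,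
      (K.eraseArc a).IsDicolouring k φ ∧ φ z₁ = φ z₂ :=
  knob_minus_arc_dicolouring_general k D K z₁ z₂ hcrit hknob
end

section
/- Every handcuff contains a subdigraph H′ with ρ(H′) ≤ −2. -/
open Digraph' in
/-- `D` is a handcuff: obtained from the digraph on `{x, x', y, z, z'}` with
arcs `xy, x'y, yz, yz', z'x', zx', z'x` by adding two bidirected paths of odd
length, `P₁` linking `z` and `z'` and `P₂` linking `x` and `x'`, whose internal
vertices may intersect each other but avoid `{x, x', y, z, z'}`. -/
def Digraph'.IsHandcuff {V : Type*} [DecidableEq V] (D : Digraph' V) : Prop :=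
  ∃ (x x' y z z' : V) (p₁ p₂ : List V),
    IsOddBidirPathList p₁ z z' ∧ IsOddBidirPathList p₂ x x' ∧
    ([x, x', y, z, z'] : List V).Nodup ∧
    p₁.toFinset ∩ {x, x', y, z, z'} = {z, z'} ∧
    p₂.toFinset ∩ {x, x', y, z, z'} = {x, x'} ∧
    D.verts = {x, x', y, z, z'} ∪ p₁.toFinset ∪ p₂.toFinset ∧
    D.arcs = pathDigonArcs p₁ ∪ pathDigonArcs p₂ ∪
      {(x, y), (x', y), (y, z), (y, z'), (z', x'), (z, x'), (z', x)}

/-!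
The handcuff itself has potential at most `-2`. Let `P₁`, `P₂` have `L₁`, `L₂` vertices (both
even), share `t` vertices, and let `c` be the number of edges of `P₂` with both ends on `P₁`.
Then `n ≤ L₁ + L₂ + 1 - t`, and `m ≥ 2 L₁ + 2 L₂ + 3 - 2 c` because every digon shared by the
two paths is such an edge; moreover `c ≤ t - 1` when `t > 0`, since the edges of a path inside a
vertex set form a forest. A perfect matching of `P₁` together with a greedy matching of
`P₂ - V(P₁)` gives `2 π ≥ L₁ + L₂ + c - 2 t - 1`, and `2 π ≥ L₁ + L₂` by parity when `t = 0`.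
Hence `ρ ≤ -1 - 5 (t - c) ≤ -6` if `t > 0`, and `ρ ≤ -2` if `t = 0`.
-/

namespace Digraph'

section Lists

variable {V : Type*}

def adjPairs (l : List V) : List (V × V) := l.zip l.tail

@[simp] lemma adjPairs_nil : adjPairs ([] : List V) = [] := rfl

@[simp] lemma adjPairs_singleton (x : V) : adjPairs [x] = [] := rfl

@[simp] lemma adjPairs_cons_cons (x y : V) (l : List V) :
    adjPairs (x :: y :: l) = (x, y) :: adjPairs (y :: l) := rfl

lemma mem_of_mem_adjPairs {l : List V} {e : V × V} (h : e ∈ adjPairs l) : e.1 ∈ l ∧ e.2 ∈ l :=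
  ⟨(List.of_mem_zip h).1, List.mem_of_mem_tail (List.of_mem_zip h).2⟩

lemma length_adjPairs (l : List V) : (adjPairs l).length = l.length - 1 := by
  simp [adjPairs]

lemma nodup_adjPairs {l : List V} (h : l.Nodup) : (adjPairs l).Nodup := by
  apply List.Nodup.of_map Prod.snd
  rw [adjPairs, List.map_snd_zip (by simp)]
  exact h.tail

lemma adjPairs_sublist_cons (x : V) (l : List V) : (adjPairs l).Sublist (adjPairs (x :: l)) := by
  cases l with
  | nil => simp
  | cons y l => simp

lemma swap_notMem_adjPairs :
    ∀ {l : List V}, l.Nodup → ∀ {e : V × V}, e ∈ adjPairs l → e.swap ∉ adjPairs l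
  | [], _, _, he => by simp at he
  | [_], _, _, he => by simp at he
  | x :: y :: l, hl, e, he => by
    intro hswap
    obtain ⟨hx, hyl⟩ := List.nodup_cons.mp hl
    simp only [adjPairs_cons_cons, List.mem_cons] at he hswap
    rcases he with rfl | he <;> rcases hswap with hswap | hswap
    · exact hx (by simp [Prod.ext_iff] at hswap; simp [hswap.1])
    · exact hx (mem_of_mem_adjPairs hswap).2
    · obtain ⟨rfl, rfl⟩ := Prod.ext_iff.mp hswap
      exact hx (mem_of_mem_adjPairs he).2
    · exact swap_notMem_adjPairs hyl he hswap

def ends (M : List (V × V)) : List V := M.flatMap fun e => [e.1, e.2]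

lemma mem_ends {M : List (V × V)} {v : V} : v ∈ ends M ↔ ∃ e ∈ M, v = e.1 ∨ v = e.2 := by
  simp [ends]

lemma ends_append (M N : List (V × V)) : ends (M ++ N) = ends M ++ ends N :=
  List.flatMap_append ..

lemma nodup_of_nodup_ends {M : List (V × V)} (h : (ends M).Nodup) : M.Nodup :=
  (List.nodup_flatMap.mp h).2.imp fun hef hef' => by
    subst hef'
    exact List.disjoint_left.mp hef (List.mem_cons_self ..) (List.mem_cons_self ..)

lemma endpoints_ne_of_nodup_ends {M : List (V × V)} (h : (ends M).Nodup) {e f : V × V}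
    (he : e ∈ M) (hf : f ∈ M) (hne : e ≠ f) :
    e.1 ≠ f.1 ∧ e.1 ≠ f.2 ∧ e.2 ≠ f.1 ∧ e.2 ≠ f.2 := by
  have : Std.Symm (Function.onFun List.Disjoint fun e : V × V => [e.1, e.2]) :=
    ⟨fun _ _ h => h.symm⟩
  have := (List.nodup_flatMap.mp h).2.forall he hf hne
  simp_all [eq_comm]

/-- A matching of the bidirected path `l` minus `S`. For duplicate-free `l`, the pairs are
disjoint because their ends occur in order along `l`. -/
def IsPairing (S : Finset V) (l : List V) (M : List (V × V)) : Prop :=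
  (∀ e ∈ M, e ∈ adjPairs l ∧ e.1 ∉ S ∧ e.2 ∉ S) ∧ (ends M).Sublist l

lemma IsPairing.cons {S : Finset V} {l : List V} {M : List (V × V)} (h : IsPairing S l M)
    (x : V) : IsPairing S (x :: l) M :=
  ⟨fun e he => ⟨(adjPairs_sublist_cons x l).subset (h.1 e he).1, (h.1 e he).2⟩, h.2.cons x⟩

lemma IsPairing.cons_cons {S : Finset V} {l : List V} {M : List (V × V)}
    (h : IsPairing S l M) {x y : V} (hx : x ∉ S) (hy : y ∉ S) :
    IsPairing S (x :: y :: l) ((x, y) :: M) := by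
  refine ⟨?_, (h.2.cons_cons y).cons_cons x⟩
  rintro e (_ | ⟨_, he⟩)
  · exact ⟨by simp, hx, hy⟩
  · exact (h.cons y |>.cons x).1 e he

lemma IsOddBidirPathList.left_mem {p : List V} {a b : V} (h : IsOddBidirPathList p a b) :
    a ∈ p :=
  List.mem_of_mem_head? h.2.2.1

lemma IsOddBidirPathList.right_mem {p : List V} {a b : V} (h : IsOddBidirPathList p a b) :
    b ∈ p :=
  List.mem_of_mem_getLast? h.2.2.2

end Lists

section Arcs

variable {V : Type*} [DecidableEq V]

lemma mem_symArcs {s : Finset (V × V)} {e : V × V} : e ∈ symArcs s ↔ e ∈ s ∨ e.swap ∈ s := by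
  simp [symArcs, Prod.swap_eq_iff_eq_swap]

lemma card_symArcs_le (s : Finset (V × V)) : (symArcs s).card ≤ 2 * s.card := by
  grw [symArcs, Finset.card_union_le, Finset.card_image_le]
  omega

lemma card_symArcs {s : Finset (V × V)} (h : ∀ e ∈ s, e.swap ∉ s) :
    (symArcs s).card = 2 * s.card := by
  have hdisj : Disjoint s (s.image Prod.swap) := by
    simp only [Finset.disjoint_left, Finset.mem_image]
    rintro e he ⟨f, hf, rfl⟩
    exact h f hf (by simpa using he)
  rw [symArcs, Finset.card_union_of_disjoint hdisj,
    Finset.card_image_of_injective _ Prod.swap_injective, two_mul]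

lemma pathArcs_eq (l : List V) : pathArcs l = (adjPairs l).toFinset := rfl

lemma card_pathDigonArcs {l : List V} (h : l.Nodup) :
    (pathDigonArcs l).card = 2 * (l.length - 1) := by
  rw [pathDigonArcs, card_symArcs, pathArcs_eq, List.toFinset_card_of_nodup (nodup_adjPairs h),
    length_adjPairs]
  intro e he
  simpa [pathArcs_eq] using swap_notMem_adjPairs h (by simpa [pathArcs_eq] using he)

lemma mem_of_mem_pathDigonArcs {l : List V} {e : V × V} (h : e ∈ pathDigonArcs l) :
    e.1 ∈ l ∧ e.2 ∈ l := by
  rw [pathDigonArcs, mem_symArcs, pathArcs_eq, List.mem_toFinset, List.mem_toFinset] at h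
  rcases h with h | h
  · exact mem_of_mem_adjPairs h
  · exact (mem_of_mem_adjPairs h).symm

lemma hasDigon_of_mem_adjPairs {D : Digraph' V} {l : List V} (hl : pathDigonArcs l ⊆ D.arcs)
    {e : V × V} (he : e ∈ adjPairs l) : D.HasDigon e.1 e.2 :=
  ⟨hl (by simp [pathDigonArcs, mem_symArcs, pathArcs_eq, he]),
    hl (by simp [pathDigonArcs, mem_symArcs, pathArcs_eq, he])⟩

end Arcs

section Counting

variable {V : Type*} [DecidableEq V] (S : Finset V)

def countPairsIn (l : List V) : ℕ := (adjPairs l).countP fun e => e.1 ∈ S ∧ e.2 ∈ S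

def headIn : List V → ℕ
  | [] => 0
  | x :: _ => if x ∈ S then 1 else 0

@[simp] lemma countPairsIn_nil : countPairsIn S [] = 0 := rfl

@[simp] lemma countPairsIn_singleton (x : V) : countPairsIn S [x] = 0 := rfl

@[simp] lemma headIn_nil : headIn S [] = 0 := rfl

@[simp] lemma headIn_cons (x : V) (l : List V) : headIn S (x :: l) = if x ∈ S then 1 else 0 :=
  rfl

lemma countPairsIn_cons (x : V) (l : List V) :
    countPairsIn S (x :: l) = countPairsIn S l + if x ∈ S then headIn S l else 0 := by
  cases l with
  | nil => simp
  | cons y l => by_cases hx : x ∈ S <;> by_cases hy : y ∈ S <;> simp [countPairsIn, hx, hy]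

lemma headIn_le_one (l : List V) : headIn S l ≤ 1 := by
  cases l with
  | nil => simp
  | cons x l => by_cases hx : x ∈ S <;> simp [hx]

lemma headIn_le_countP (l : List V) : headIn S l ≤ l.countP (· ∈ S) := by
  cases l with
  | nil => simp
  | cons x l => by_cases hx : x ∈ S <;> simp [hx]

/-- `ℕ`-subtraction makes this also say that there are no such pairs when `l` misses `S`. -/
lemma countPairsIn_le_countP_sub_one :
    ∀ l : List V, countPairsIn S l ≤ l.countP (· ∈ S) - 1
  | [] => by simp
  | x :: l => by
    have ih := countPairsIn_le_countP_sub_one l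
    have := headIn_le_one S l
    have := headIn_le_countP S l
    by_cases hx : x ∈ S <;> simp [countPairsIn_cons, hx] <;> omega

/-- Greedy matching of `l - S` from the left. Besides itself, a vertex of `S` leaves at most one
vertex unmatched (its predecessor), and none when it starts `l` or follows another vertex of `S`:
these are counted by `headIn S l + countPairsIn S l`. -/
lemma exists_isPairing : ∀ l : List V, ∃ M, IsPairing S l M ∧
    l.length + countPairsIn S l + headIn S l ≤ 2 * M.length + 2 * l.countP (· ∈ S) + 1
  | [] => ⟨[], ⟨by simp, by simp [ends]⟩, by simp⟩
  | [x] => ⟨[], ⟨by simp, by simp [ends]⟩, by by_cases hx : x ∈ S <;> simp [hx]⟩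
  | x :: y :: l => by
    by_cases hx : x ∈ S
    · obtain ⟨M, hM, hlen⟩ := exists_isPairing (y :: l)
      refine ⟨M, hM.cons x, ?_⟩
      rw [countPairsIn_cons S x, List.countP_cons, headIn_cons S x, List.length_cons]
      simp only [hx, if_true, decide_true]
      omega
    · obtain ⟨M, hM, hlen⟩ := exists_isPairing l
      have := headIn_le_one S l
      by_cases hy : y ∈ S
      · refine ⟨M, (hM.cons y).cons x, ?_⟩
        simp [countPairsIn_cons, hx, hy]
        omega
      · refine ⟨(x, y) :: M, hM.cons_cons hx hy, ?_⟩
        simp [countPairsIn_cons, hx, hy]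
        omega

end Counting

section Potential

variable {V : Type*} [DecidableEq V]

lemma card_pathDigonArcs_inter_le (p₁ p₂ : List V) :
    (pathDigonArcs p₁ ∩ pathDigonArcs p₂).card ≤ 2 * countPairsIn p₁.toFinset p₂ := by
  set inner := ((adjPairs p₂).filter fun e => e.1 ∈ p₁.toFinset ∧ e.2 ∈ p₁.toFinset).toFinset
  have hsub : pathDigonArcs p₁ ∩ pathDigonArcs p₂ ⊆ symArcs inner := by
    intro e he
    obtain ⟨he₁, he₂⟩ := Finset.mem_inter.mp he
    have hends := mem_of_mem_pathDigonArcs he₁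
    rw [pathDigonArcs, mem_symArcs, pathArcs_eq, List.mem_toFinset, List.mem_toFinset] at he₂
    simpa [inner, mem_symArcs, hends] using he₂
  calc (pathDigonArcs p₁ ∩ pathDigonArcs p₂).card
      ≤ 2 * inner.card := (Finset.card_le_card hsub).trans (card_symArcs_le inner)
    _ ≤ 2 * countPairsIn p₁.toFinset p₂ := by
      grw [List.toFinset_card_le, ← List.countP_eq_length_filter]
      rfl

lemma countP_mem_eq_card_inter {l : List V} (hl : l.Nodup) (S : Finset V) :
    l.countP (· ∈ S) = (S ∩ l.toFinset).card := by
  rw [List.countP_eq_length_filter, ← List.toFinset_card_of_nodup (hl.filter _),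
    List.toFinset_filter]
  simp [Finset.filter_mem_eq_inter, Finset.inter_comm]

lemma card_le_piNum {D : Digraph' V} {M : Finset (V × V)} (hM : D.IsDigonMatching M) :
    M.card ≤ D.piNum := by
  refine le_csSup ⟨D.verts.card, ?_⟩ ⟨M, hM, rfl⟩
  rintro k ⟨M', hM', rfl⟩
  refine Finset.card_le_card_of_injOn Prod.fst (fun e he => (D.wf e (hM'.1 e he).1).1) ?_
  intro e he f hf hef
  by_contra hne
  exact (hM'.2 e he f hf hne).1 hef

lemma length_le_piNum {D : Digraph' V} {M : List (V × V)} (hD : ∀ e ∈ M, D.HasDigon e.1 e.2)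
    (hM : (ends M).Nodup) : M.length ≤ D.piNum := by
  rw [← List.toFinset_card_of_nodup (nodup_of_nodup_ends hM)]
  refine card_le_piNum ⟨fun e he => hD e (List.mem_toFinset.mp he), ?_⟩
  intro e he f hf hne
  exact endpoints_ne_of_nodup_ends hM (List.mem_toFinset.mp he) (List.mem_toFinset.mp hf) hne

lemma length_add_length_le_piNum {D : Digraph' V} {p₁ p₂ : List V} (h₁ : p₁.Nodup)
    (h₂ : p₂.Nodup) (hA₁ : pathDigonArcs p₁ ⊆ D.arcs) (hA₂ : pathDigonArcs p₂ ⊆ D.arcs)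
    {M₁ M₂ : List (V × V)} (hM₁ : IsPairing ∅ p₁ M₁) (hM₂ : IsPairing p₁.toFinset p₂ M₂) :
    M₁.length + M₂.length ≤ D.piNum := by
  rw [← List.length_append]
  refine length_le_piNum ?_ ?_
  · rintro e he
    rcases List.mem_append.mp he with he | he
    · exact hasDigon_of_mem_adjPairs hA₁ (hM₁.1 e he).1
    · exact hasDigon_of_mem_adjPairs hA₂ (hM₂.1 e he).1
  · rw [ends_append]
    refine (h₁.sublist hM₁.2).append (h₂.sublist hM₂.2) fun v hv₁ hv₂ => ?_
    obtain ⟨e, he, rfl | rfl⟩ := mem_ends.mp hv₂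
    · exact (hM₂.1 e he).2.1 (List.mem_toFinset.mpr (hM₁.2.subset hv₁))
    · exact (hM₂.1 e he).2.2 (List.mem_toFinset.mpr (hM₁.2.subset hv₁))

lemma potential_le_neg_two_of_paths {D : Digraph' V} {p₁ p₂ : List V} (h₁ : p₁.Nodup)
    (h₂ : p₂.Nodup) (he₁ : Even p₁.length) (he₂ : Even p₂.length)
    (hA₁ : pathDigonArcs p₁ ⊆ D.arcs) (hA₂ : pathDigonArcs p₂ ⊆ D.arcs)
    (hn : D.n + (p₁.toFinset ∩ p₂.toFinset).card ≤ p₁.length + p₂.length + 1)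
    (hm : 2 * p₁.length + 2 * p₂.length + 3 ≤ D.m + (pathDigonArcs p₁ ∩ pathDigonArcs p₂).card) :
    D.potential ≤ -2 := by
  have hshared := card_pathDigonArcs_inter_le p₁ p₂
  have hinner := countPairsIn_le_countP_sub_one p₁.toFinset p₂
  rw [countP_mem_eq_card_inter h₂] at hinner
  obtain ⟨M₁, hM₁, hlen₁⟩ := exists_isPairing ∅ p₁
  obtain ⟨M₂, hM₂, hlen₂⟩ := exists_isPairing p₁.toFinset p₂
  rw [countP_mem_eq_card_inter h₂] at hlen₂
  have hπ := length_add_length_le_piNum h₁ h₂ hA₁ hA₂ hM₁ hM₂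
  simp only [Finset.notMem_empty, decide_false, List.countP_false, Function.const_apply] at hlen₁
  obtain ⟨k₁, hk₁⟩ := he₁
  obtain ⟨k₂, hk₂⟩ := he₂
  rw [potential]
  omega

end Potential

section Handcuff

variable {V : Type*} [DecidableEq V] {D : Digraph' V}

lemma n_add_card_inter_le {p₁ p₂ : List V} {y : V} (h₁ : p₁.Nodup) (h₂ : p₂.Nodup)
    (hD : D.verts ⊆ insert y (p₁.toFinset ∪ p₂.toFinset)) :
    D.n + (p₁.toFinset ∩ p₂.toFinset).card ≤ p₁.length + p₂.length + 1 := by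
  have hunion := Finset.card_union_add_card_inter p₁.toFinset p₂.toFinset
  rw [List.toFinset_card_of_nodup h₁, List.toFinset_card_of_nodup h₂] at hunion
  have := (Finset.card_le_card hD).trans (Finset.card_insert_le _ _)
  rw [n]
  omega

lemma m_add_card_inter_eq {p₁ p₂ : List V} {F : Finset (V × V)} (h₁ : p₁.Nodup) (h₂ : p₂.Nodup)
    (hp₁ : p₁ ≠ []) (hp₂ : p₂ ≠ []) (hD : D.arcs = pathDigonArcs p₁ ∪ pathDigonArcs p₂ ∪ F)
    (hF : Disjoint (pathDigonArcs p₁ ∪ pathDigonArcs p₂) F) :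
    D.m + (pathDigonArcs p₁ ∩ pathDigonArcs p₂).card + 4 =
      2 * p₁.length + 2 * p₂.length + F.card := by
  have hunion := Finset.card_union_add_card_inter (pathDigonArcs p₁) (pathDigonArcs p₂)
  rw [card_pathDigonArcs h₁, card_pathDigonArcs h₂] at hunion
  have := List.length_pos_iff.mpr hp₁
  have := List.length_pos_iff.mpr hp₂
  rw [m, hD, Finset.card_union_of_disjoint hF]
  omega

lemma mem_of_toFinset_inter_eq {l : List V} {T U : Finset V} (h : l.toFinset ∩ T = U) {v : V}
    (hl : v ∈ l) (hT : v ∈ T) : v ∈ U :=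
  h ▸ Finset.mem_inter.mpr ⟨List.mem_toFinset.mpr hl, hT⟩

variable {x x' y z z' : V}

lemma card_handcuffArcs (hnd : [x, x', y, z, z'].Nodup) :
    ({(x, y), (x', y), (y, z), (y, z'), (z', x'), (z, x'), (z', x)} :
      Finset (V × V)).card = 7 := by
  simp only [List.nodup_cons, List.mem_cons, List.not_mem_nil, or_false, not_or,
    not_false_eq_true, List.nodup_nil, and_true] at hnd
  simp only [Finset.card_insert_eq_ite, Finset.mem_insert, Finset.mem_singleton, Prod.ext_iff]
  grind

/-- Each of the seven arcs has an end outside `P₁` and an end outside `P₂`. -/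
lemma disjoint_handcuffArcs {p₁ p₂ : List V} (hnd : [x, x', y, z, z'].Nodup)
    (hcap₁ : p₁.toFinset ∩ {x, x', y, z, z'} = {z, z'})
    (hcap₂ : p₂.toFinset ∩ {x, x', y, z, z'} = {x, x'}) :
    Disjoint (pathDigonArcs p₁ ∪ pathDigonArcs p₂)
      {(x, y), (x', y), (y, z), (y, z'), (z', x'), (z, x'), (z', x)} := by
  simp only [List.nodup_cons, List.mem_cons, List.not_mem_nil, or_false, not_or,
    not_false_eq_true, List.nodup_nil, and_true] at hnd
  rw [Finset.disjoint_right]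
  intro e heF he
  have hT : e.1 ∈ ({x, x', y, z, z'} : Finset V) ∧ e.2 ∈ ({x, x', y, z, z'} : Finset V) := by
    simp only [Finset.mem_insert, Finset.mem_singleton] at heF
    rcases heF with rfl | rfl | rfl | rfl | rfl | rfl | rfl <;> simp
  rcases Finset.mem_union.mp he with he | he
  · have h₁ := mem_of_toFinset_inter_eq hcap₁ (mem_of_mem_pathDigonArcs he).1 hT.1
    have h₂ := mem_of_toFinset_inter_eq hcap₁ (mem_of_mem_pathDigonArcs he).2 hT.2
    simp only [Finset.mem_insert, Finset.mem_singleton] at heF h₁ h₂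
    rcases heF with rfl | rfl | rfl | rfl | rfl | rfl | rfl <;> grind
  · have h₁ := mem_of_toFinset_inter_eq hcap₂ (mem_of_mem_pathDigonArcs he).1 hT.1
    have h₂ := mem_of_toFinset_inter_eq hcap₂ (mem_of_mem_pathDigonArcs he).2 hT.2
    simp only [Finset.mem_insert, Finset.mem_singleton] at heF h₁ h₂
    rcases heF with rfl | rfl | rfl | rfl | rfl | rfl | rfl <;> grind

lemma IsHandcuff.potential_le (h : D.IsHandcuff) : D.potential ≤ -2 := by
  obtain ⟨x, x', y, z, z', p₁, p₂, hP₁, hP₂, hnd, hcap₁, hcap₂, hverts, harcs⟩ := h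
  refine potential_le_neg_two_of_paths hP₁.1 hP₂.1 hP₁.2.1 hP₂.2.1 ?_ ?_ ?_ ?_
  · exact harcs ▸ Finset.subset_union_left.trans Finset.subset_union_left
  · exact harcs ▸ Finset.subset_union_right.trans Finset.subset_union_left
  · refine n_add_card_inter_le (y := y) hP₁.1 hP₂.1 (hverts ▸ fun v hv => ?_)
    have := hP₁.left_mem; have := hP₁.right_mem; have := hP₂.left_mem; have := hP₂.right_mem
    simp only [Finset.mem_union, Finset.mem_insert, Finset.mem_singleton,
      List.mem_toFinset] at hv ⊢
    grind
  · have := m_add_card_inter_eq hP₁.1 hP₂.1 (List.ne_nil_of_mem hP₁.left_mem)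
      (List.ne_nil_of_mem hP₂.left_mem) harcs (disjoint_handcuffArcs hnd hcap₁ hcap₂)
    rw [card_handcuffArcs hnd] at this
    omega

end Handcuff

end Digraph'

open Digraph' in
/-- Every handcuff has a subdigraph with potential at most
`-2`. -/
theorem handcuff_subdigraph_potential {V : Type*} [DecidableEq V]
    (D : Digraph' V) (h : D.IsHandcuff) :
    ∃ H : Digraph' V, H.IsSubdigraph D ∧ H.potential ≤ -2 :=
  ⟨D, ⟨subset_rfl, subset_rfl⟩, h.potential_le⟩
end
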